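/- Let Y ∈ ℝ^{n×B} be a matrix of one-hot label rows for n nodes over B balanced classes (each class has exactly n/B nodes), let Ā ∈ ℝ^{n×n} be a row-stochastic matrix supported on neighborhoods N(v), and let B̂ ∈ ℝ^{n×B} be defined by B̂_{u,i} = (B/n)·1[y(u)=i]. Then (1/n)‖Y − ĀB̂‖_F² ≤ (1/n) ∑_{v} [1 + (B²/n)·(1 − ε(v))], where ε(v) = (1/|N(v)|)∑_{u ∈ N(v)} 1[y(v)=y(u)] is the one-hop homophily score. -/

import Mathlib

/-! Write `p v i` for the mass that row `v` of `Ā` puts on neighbours of class `i`. Row `v` of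
`ĀB̂` is `(B/n) · p v`, with `p v` a probability vector and `B/n ≤ 1`, so its squared distance
to the one-hot row `Y v` is at most `1 + (B/n)² (1 - p v (y v))`. The heterophilic mass
`1 - p v (y v)` vanishes when all neighbours of `v` share its label; otherwise it is at most
`1 ≤ n (1 - ε v)`, because then `1 - ε v ≥ 1/|N v| ≥ 1/n`. Finally `(B/n)² n = B²/n`. -/

open Finset

theorem sum_sq_indicator_sub_mul_le {κ : Type*} [Fintype κ] [DecidableEq κ] {p : κ → ℝ}
    (hp0 : ∀ i, 0 ≤ p i) (hp1 : ∑ i, p i = 1) (k : κ) {c : ℝ} (hc0 : 0 ≤ c) (hc1 : c ≤ 1) :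
    ∑ i, ((if k = i then 1 else 0) - c * p i) ^ 2 ≤ 1 + c ^ 2 * (1 - p k) := by
  have hp_le_one : ∀ i, p i ≤ 1 := fun i => hp1 ▸ single_le_sum (fun j _ => hp0 j) (mem_univ i)
  have hk : (1 - c * p k) ^ 2 ≤ 1 := by
    have : c * p k ≤ 1 := mul_le_one₀ hc1 (hp0 k) (hp_le_one k)
    nlinarith [mul_nonneg hc0 (hp0 k)]
  have hrest : ∑ i ∈ univ.erase k, ((if k = i then 1 else 0) - c * p i) ^ 2
      ≤ c ^ 2 * (1 - p k) :=
    calc ∑ i ∈ univ.erase k, ((if k = i then 1 else 0) - c * p i) ^ 2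
        ≤ ∑ i ∈ univ.erase k, c ^ 2 * p i := by
          refine sum_le_sum fun i hi => ?_
          rw [if_neg (ne_of_mem_erase hi).symm]
          nlinarith [mul_nonneg (sq_nonneg c) (mul_nonneg (hp0 i) (sub_nonneg.2 (hp_le_one i)))]
      _ = c ^ 2 * (1 - p k) := by rw [← mul_sum, sum_erase_eq_sub (mem_univ k), hp1]
  rw [← add_sum_erase _ _ (mem_univ k), if_pos rfl]
  linarith

theorem one_sub_card_filter_div_card_nonneg {α : Type*} (s : Finset α) (P : α → Prop)
    [DecidablePred P] : 0 ≤ 1 - (#(s.filter P) : ℝ) / #s :=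
  sub_nonneg.2 (div_le_one_of_le₀ (by exact_mod_cast card_filter_le s P) (Nat.cast_nonneg _))

theorem inv_card_le_one_sub_card_filter_div_card {α : Type*} {s : Finset α} {P : α → Prop}
    [DecidablePred P] (h : ∃ x ∈ s, ¬ P x) : (#s : ℝ)⁻¹ ≤ 1 - (#(s.filter P) : ℝ) / #s := by
  obtain ⟨x, hxs, hx⟩ := h
  have hs : (0 : ℝ) < #s := by exact_mod_cast card_pos.2 ⟨x, hxs⟩
  have hlt : #(s.filter P) + 1 ≤ #s :=
    card_lt_card (filter_ssubset.2 ⟨x, hxs, hx⟩)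
  rw [le_sub_iff_add_le, ← one_div, ← add_div, div_le_one hs]
  exact_mod_cast (add_comm 1 _).le.trans hlt

section ClassMass

variable {ι κ : Type*} [Fintype ι] [DecidableEq κ]

def classMass (w : ι → ℝ) (y : ι → κ) (i : κ) : ℝ := ∑ u with y u = i, w u

theorem classMass_nonneg {w : ι → ℝ} (hw : ∀ u, 0 ≤ w u) (y : ι → κ) (i : κ) :
    0 ≤ classMass w y i :=
  sum_nonneg fun u _ => hw u

theorem sum_classMass [Fintype κ] (w : ι → ℝ) (y : ι → κ) :
    ∑ i, classMass w y i = ∑ u, w u :=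
  sum_fiberwise univ y w

theorem classMass_eq_one_of_forall_mem {w : ι → ℝ} {s : Finset ι} (hsupp : ∀ u ∉ s, w u = 0)
    (hsum : ∑ u ∈ s, w u = 1) {y : ι → κ} {k : κ} (hk : ∀ u ∈ s, y u = k) :
    classMass w y k = 1 := by
  rw [classMass, ← hsum]
  exact (sum_subset (fun u hu => mem_filter.2 ⟨mem_univ u, hk u hu⟩)
    fun u _ hu => hsupp u hu).symm

theorem mul_apply_eq_mul_classMass {A : Matrix ι ι ℝ} {M : Matrix ι κ ℝ} {y : ι → κ} {c : ℝ}
    (hM : ∀ u i, M u i = c * if y u = i then 1 else 0) (v : ι) (i : κ) :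
    (A * M) v i = c * classMass (A v) y i := by
  simp only [Matrix.mul_apply, hM, classMass, sum_filter, mul_sum]
  refine sum_congr rfl fun u _ => ?_
  split_ifs <;> ring

theorem one_sub_classMass_le_card_mul {w : ι → ℝ} {s : Finset ι} (hw : ∀ u, 0 ≤ w u)
    (hsupp : ∀ u ∉ s, w u = 0) (hsum : ∑ u ∈ s, w u = 1) (y : ι → κ) (k : κ) :
    1 - classMass w y k ≤ Fintype.card ι * (1 - (#(s.filter (k = y ·)) : ℝ) / #s) := by
  rcases em (∃ u ∈ s, y u ≠ k) with ⟨u, hu, hne⟩ | hhom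
  · have hs : (0 : ℝ) < #s := by exact_mod_cast card_pos.2 ⟨u, hu⟩
    have hcard : (#s : ℝ) ≤ Fintype.card ι := by exact_mod_cast card_le_univ s
    calc 1 - classMass w y k
        ≤ Fintype.card ι * (Fintype.card ι : ℝ)⁻¹ := by
          rw [mul_inv_cancel₀ (hs.trans_le hcard).ne']
          linarith [classMass_nonneg hw y k]
      _ ≤ Fintype.card ι * (1 - (#(s.filter (k = y ·)) : ℝ) / #s) := by
          gcongr
          exact (inv_anti₀ hs hcard).trans
            (inv_card_le_one_sub_card_filter_div_card ⟨u, hu, fun h => hne h.symm⟩)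
  · have hhom : ∀ u ∈ s, y u = k := fun u hu => not_not.1 fun h => hhom ⟨u, hu, h⟩
    rw [classMass_eq_one_of_forall_mem hsupp hsum hhom, sub_self]
    exact mul_nonneg (Nat.cast_nonneg _) (one_sub_card_filter_div_card_nonneg _ _)

end ClassMass

theorem label_smoothing_bound_general
    {n B : ℕ} (hn : 0 < n) (hdvd : B ∣ n)
    (y : Fin n → Fin B)
    (N : Fin n → Finset (Fin n))
    (Abar : Matrix (Fin n) (Fin n) ℝ)
    (hA0 : ∀ v u, 0 ≤ Abar v u)
    (hsupp : ∀ v u, u ∉ N v → Abar v u = 0)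
    (hrow : ∀ v, ∑ u ∈ N v, Abar v u = 1)
    (Y Bhat : Matrix (Fin n) (Fin B) ℝ)
    (hY : ∀ v i, Y v i = if y v = i then (1 : ℝ) else 0)
    (hBhat : ∀ u i, Bhat u i = (B : ℝ) / (n : ℝ) * (if y u = i then 1 else 0))
    (ε : Fin n → ℝ)
    (hε : ∀ v, ε v =
      (((N v).filter (fun u => y v = y u)).card : ℝ) / ((N v).card : ℝ)) :
    (1 / (n : ℝ)) * ∑ v, ∑ i, (Y v i - (Abar * Bhat) v i) ^ 2
      ≤ (1 / (n : ℝ)) *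
          ∑ v : Fin n, (1 + (B : ℝ) ^ 2 / (n : ℝ) * (1 - ε v)) := by
  have hnR : (0 : ℝ) < n := by exact_mod_cast hn
  have hc1 : (B : ℝ) / n ≤ 1 := (div_le_one hnR).2 (by exact_mod_cast Nat.le_of_dvd hn hdvd)
  have hrow_univ : ∀ v, ∑ u, Abar v u = 1 := fun v =>
    (sum_subset (subset_univ _) fun u _ hu => hsupp v u hu).symm.trans (hrow v)
  refine mul_le_mul_of_nonneg_left (sum_le_sum fun v _ => ?_) (by positivity)
  simp only [hY, mul_apply_eq_mul_classMass hBhat]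
  calc ∑ i, ((if y v = i then 1 else 0) - B / n * classMass (Abar v) y i) ^ 2
      ≤ 1 + ((B : ℝ) / n) ^ 2 * (1 - classMass (Abar v) y (y v)) :=
        sum_sq_indicator_sub_mul_le (classMass_nonneg (hA0 v) y)
          ((sum_classMass _ _).trans (hrow_univ v)) (y v) (by positivity) hc1
    _ ≤ 1 + ((B : ℝ) / n) ^ 2 * (n * (1 - ε v)) := by
        gcongr
        simpa [hε] using one_sub_classMass_le_card_mul (hA0 v) (hsupp v) (hrow v) y (y v)
    _ = 1 + (B : ℝ) ^ 2 / n * (1 - ε v) := by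
        field_simp

/-- For one-hot label matrix `Y`, row-stochastic matrix `Ā`
supported on neighborhoods, and the balanced class-average indicator matrix
`B̂`, the averaged squared Frobenius error `(1/n)‖Y − ĀB̂‖_F²` is bounded by
`(1/n)·∑_v [1 + (B²/n)(1 − ε(v))]`, where `ε(v)` is the one-hop homophily
score. -/
theorem label_smoothing_bound
    {n B : ℕ} (hn : 0 < n) (hB : 0 < B) (hdvd : B ∣ n)
    (y : Fin n → Fin B)
    (hbal : ∀ i : Fin B, (Finset.univ.filter (fun v => y v = i)).card = n / B)
    (N : Fin n → Finset (Fin n)) (hNne : ∀ v, (N v).Nonempty)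
    (Abar : Matrix (Fin n) (Fin n) ℝ)
    (hA0 : ∀ v u, 0 ≤ Abar v u)
    (hsupp : ∀ v u, u ∉ N v → Abar v u = 0)
    (hrow : ∀ v, ∑ u ∈ N v, Abar v u = 1)
    (Y Bhat : Matrix (Fin n) (Fin B) ℝ)
    (hY : ∀ v i, Y v i = if y v = i then (1 : ℝ) else 0)
    (hBhat : ∀ u i, Bhat u i = (B : ℝ) / (n : ℝ) * (if y u = i then 1 else 0))
    (ε : Fin n → ℝ)
    (hε : ∀ v, ε v =
      (((N v).filter (fun u => y v = y u)).card : ℝ) / ((N v).card : ℝ)) :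
    (1 / (n : ℝ)) * ∑ v, ∑ i, (Y v i - (Abar * Bhat) v i) ^ 2
      ≤ (1 / (n : ℝ)) *
          ∑ v : Fin n, (1 + (B : ℝ) ^ 2 / (n : ℝ) * (1 - ε v)) :=
  label_smoothing_bound_general hn hdvd y N Abar hA0 hsupp hrow Y Bhat hY hBhat ε hε
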